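/- Let H be symmetric positive semidefinite, G symmetric positive definite, ρ > 0. The smallest nonzero eigenvalue of H^{1/2}((1/ρ)G + H)^{-1}H^{1/2} equals ρλ/(1+ρλ) where λ = λ_min^+(G^{-1/2} H G^{-1/2}) is the smallest nonzero eigenvalue of G^{-1/2} H G^{-1/2} (assuming H ≠ 0). -/

import Mathlib

/-!
With `S = G^{1/2}` and `M = S⁻¹ H S⁻¹` one has `ρ⁻¹ G + H = S (ρ⁻¹ + M) S`, hence
`H^{1/2} (ρ⁻¹ G + H)⁻¹ H^{1/2} = (H^{1/2} S⁻¹) (ρ⁻¹ + M)⁻¹ (S⁻¹ H^{1/2})`.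
Cycling the outer factors preserves the nonzero eigenvalues and produces `(ρ⁻¹ + M)⁻¹ M`,
whose nonzero eigenvalues are exactly the `λ / (ρ⁻¹ + λ) = ρλ / (1 + ρλ)` for `λ` a nonzero
eigenvalue of `M`. This map is increasing on `[0, ∞)`, which contains the spectrum of the
positive semidefinite `M`, so it sends the smallest nonzero eigenvalue to the smallest one.
-/

open Matrix

/-- `t` is an eigenvalue of the matrix `A`. -/
def HasEigen {n : ℕ} (A : Matrix (Fin n) (Fin n) ℝ) (t : ℝ) : Prop :=
  ∃ v : Fin n → ℝ, v ≠ 0 ∧ A.mulVec v = t • v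

/-- The smallest nonzero eigenvalue of a matrix. -/
noncomputable def lambdaMinPos {n : ℕ} (A : Matrix (Fin n) (Fin n) ℝ) : ℝ :=
  sInf {t : ℝ | t ≠ 0 ∧ HasEigen A t}

/-- The square root of a positive semidefinite matrix (the definition `Matrix.PosSemidef.sqrt`
of the older Mathlib, which has since been removed). -/
noncomputable def Matrix.PosSemidef.sqrt {n : Type*} [Fintype n] [DecidableEq n]
    {A : Matrix n n ℝ} (hA : A.PosSemidef) : Matrix n n ℝ :=
  (hA.1.eigenvectorUnitary : Matrix n n ℝ) *
    diagonal ((RCLike.ofReal : ℝ → ℝ) ∘ Real.sqrt ∘ hA.1.eigenvalues) *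
    (star (hA.1.eigenvectorUnitary : Matrix n n ℝ))

lemma Matrix.PosSemidef.posSemidef_sqrt {n : Type*} [Fintype n] [DecidableEq n]
    {A : Matrix n n ℝ} (hA : A.PosSemidef) : hA.sqrt.PosSemidef := by
  have hD : (diagonal ((RCLike.ofReal : ℝ → ℝ) ∘ Real.sqrt ∘ hA.1.eigenvalues)).PosSemidef :=
    .diagonal fun i => by simp [Real.sqrt_nonneg]
  unfold Matrix.PosSemidef.sqrt
  simpa [star_eq_conjTranspose] using
    hD.mul_mul_conjTranspose_same (hA.1.eigenvectorUnitary : Matrix n n ℝ)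

lemma Matrix.PosSemidef.sqrt_mul_self {n : Type*} [Fintype n] [DecidableEq n]
    {A : Matrix n n ℝ} (hA : A.PosSemidef) : hA.sqrt * hA.sqrt = A := by
  set U := (hA.1.eigenvectorUnitary : Matrix n n ℝ)
  set D := diagonal ((RCLike.ofReal : ℝ → ℝ) ∘ Real.sqrt ∘ hA.1.eigenvalues)
  have hU : star U * U = 1 := Unitary.star_mul_self_of_mem hA.1.eigenvectorUnitary.2
  have hDD : D * D = diagonal ((RCLike.ofReal : ℝ → ℝ) ∘ hA.1.eigenvalues) := by
    rw [diagonal_mul_diagonal]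
    congr 1
    funext i
    simp [Real.mul_self_sqrt (hA.eigenvalues_nonneg i)]
  calc hA.sqrt * hA.sqrt = U * (D * (star U * U) * D) * star U := by
        simp only [Matrix.PosSemidef.sqrt, U, D, Matrix.mul_assoc]
    _ = A := by
        rw [hU, Matrix.mul_one, hDD]
        conv_rhs => rw [hA.1.spectral_theorem, Unitary.conjStarAlgAut_apply]

lemma Matrix.PosDef.isUnit_det_sqrt {n : Type*} [Fintype n] [DecidableEq n]
    {A : Matrix n n ℝ} (hA : A.PosDef) : IsUnit hA.posSemidef.sqrt.det := by
  refine isUnit_iff_ne_zero.2 fun h0 => hA.det_pos.ne' ?_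
  rw [← hA.posSemidef.sqrt_mul_self, det_mul, h0, mul_zero]

section Eigen

variable {n : ℕ}

lemma hasEigen_iff_mem_spectrum {A : Matrix (Fin n) (Fin n) ℝ} {t : ℝ} :
    HasEigen A t ↔ t ∈ spectrum ℝ A := by
  rw [← spectrum_toLin', ← Module.End.hasEigenvalue_iff_mem_spectrum,
    Module.End.hasEigenvalue_iff, Submodule.ne_bot_iff]
  simp only [Module.End.mem_eigenspace_iff, toLin'_apply, HasEigen]
  exact ⟨fun ⟨v, hv, h⟩ => ⟨v, h, hv⟩, fun ⟨v, h, hv⟩ => ⟨v, hv, h⟩⟩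

lemma setOf_ne_zero_hasEigen (A : Matrix (Fin n) (Fin n) ℝ) :
    {t : ℝ | t ≠ 0 ∧ HasEigen A t} = spectrum ℝ A \ {0} := by
  ext t
  simp [hasEigen_iff_mem_spectrum, and_comm]

lemma setOf_ne_zero_hasEigen_mul_comm (A B : Matrix (Fin n) (Fin n) ℝ) :
    {t : ℝ | t ≠ 0 ∧ HasEigen (A * B) t} = {t : ℝ | t ≠ 0 ∧ HasEigen (B * A) t} := by
  simp only [setOf_ne_zero_hasEigen, spectrum.nonzero_mul_comm]

lemma HasEigen.nonneg_of_posSemidef {A : Matrix (Fin n) (Fin n) ℝ} (hA : A.PosSemidef) {t : ℝ}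
    (h : HasEigen A t) : 0 ≤ t := by
  obtain ⟨i, rfl⟩ := hA.1.spectrum_real_eq_range_eigenvalues ▸ hasEigen_iff_mem_spectrum.1 h
  exact hA.eigenvalues_nonneg i

lemma finite_setOf_ne_zero_hasEigen (A : Matrix (Fin n) (Fin n) ℝ) :
    {t : ℝ | t ≠ 0 ∧ HasEigen A t}.Finite :=
  setOf_ne_zero_hasEigen A ▸ (finite_spectrum A).sdiff

end Eigen

section Resolvent

variable {n : ℕ} {M : Matrix (Fin n) (Fin n) ℝ} {c : ℝ}

lemma HasEigen.add_ne_zero (hN : IsUnit (c • 1 + M).det) {l : ℝ} (h : HasEigen M l) :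
    c + l ≠ 0 := by
  obtain ⟨v, hv, hMv⟩ := h
  intro h0
  apply hv
  rw [← one_mulVec v, ← nonsing_inv_mul _ hN, ← mulVec_mulVec, add_mulVec, smul_mulVec,
    one_mulVec, hMv, ← add_smul, h0, zero_smul, mulVec_zero]

lemma HasEigen.inv_smul_one_add_mul (hN : IsUnit (c • 1 + M).det) {l : ℝ} (h : HasEigen M l) :
    HasEigen ((c • 1 + M)⁻¹ * M) (l / (c + l)) := by
  have hcl := h.add_ne_zero hN
  obtain ⟨v, hv, hMv⟩ := h
  have hNv : (c • 1 + M) *ᵥ v = (c + l) • v := by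
    rw [add_mulVec, smul_mulVec, one_mulVec, hMv, add_smul]
  have hNinv : (c • 1 + M)⁻¹ *ᵥ v = (c + l)⁻¹ • v := by
    rw [← inv_smul_smul₀ hcl ((c • 1 + M)⁻¹ *ᵥ v), ← mulVec_smul, ← hNv, mulVec_mulVec,
      nonsing_inv_mul _ hN, one_mulVec]
  refine ⟨v, hv, ?_⟩
  rw [← mulVec_mulVec, hMv, mulVec_smul, hNinv, smul_smul, div_eq_mul_inv]

lemma HasEigen.of_inv_smul_one_add_mul (hc : c ≠ 0) (hN : IsUnit (c • 1 + M).det) {t : ℝ}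
    (h : HasEigen ((c • 1 + M)⁻¹ * M) t) : ∃ l, HasEigen M l ∧ l / (c + l) = t := by
  obtain ⟨v, hv, hv'⟩ := h
  have hMv : M *ᵥ v = t • (c • v + M *ᵥ v) := by
    have h := congrArg ((c • 1 + M) *ᵥ ·) hv'
    simp only [mulVec_mulVec, ← Matrix.mul_assoc, mul_nonsing_inv _ hN, Matrix.one_mul] at h
    simpa only [mulVec_smul, add_mulVec, smul_mulVec, one_mulVec] using h
  have ht1 : 1 - t ≠ 0 := by
    intro h0
    rw [← sub_eq_zero.1 h0, one_smul, right_eq_add, smul_eq_zero] at hMv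
    exact hMv.elim hc hv
  refine ⟨t * c / (1 - t), ⟨v, hv, ?_⟩, by field_simp; ring⟩
  have key : (1 - t) • M *ᵥ v = (t * c) • v := by linear_combination (norm := module) hMv
  rw [div_eq_inv_mul, mul_smul, ← key, inv_smul_smul₀ ht1]

lemma setOf_ne_zero_hasEigen_inv_smul_one_add_mul (hc : c ≠ 0) (hN : IsUnit (c • 1 + M).det) :
    {t : ℝ | t ≠ 0 ∧ HasEigen ((c • 1 + M)⁻¹ * M) t} =
      (fun l => l / (c + l)) '' {l : ℝ | l ≠ 0 ∧ HasEigen M l} := by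
  ext t
  constructor
  · rintro ⟨ht, h⟩
    obtain ⟨l, hl, rfl⟩ := h.of_inv_smul_one_add_mul hc hN
    exact ⟨l, ⟨left_ne_zero_of_mul (div_eq_mul_inv l _ ▸ ht), hl⟩, rfl⟩
  · rintro ⟨l, ⟨hl0, hl⟩, rfl⟩
    exact ⟨div_ne_zero hl0 (hl.add_ne_zero hN), hl.inv_smul_one_add_mul hN⟩

end Resolvent

/- `hf0` covers `s = ∅`, where both sides are the junk value `sInf ∅ = 0`. -/
lemma Set.Finite.csInf_image_of_monotoneOn {s : Set ℝ} (hs : s.Finite) {f : ℝ → ℝ}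
    (hf : MonotoneOn f s) (hf0 : f 0 = 0) : sInf (f '' s) = f (sInf s) := by
  rcases s.eq_empty_or_nonempty with rfl | hne
  · simp [hf0]
  · exact (hf.map_isLeast ⟨hne.csInf_mem hs, fun _ h => csInf_le hs.bddBelow h⟩).csInf_eq

lemma monotoneOn_div_add {c : ℝ} (hc : 0 < c) :
    MonotoneOn (fun l => l / (c + l)) (Set.Ici 0) := by
  intro a ha b hb hab
  simp only [Set.mem_Ici] at ha hb
  rw [div_le_div_iff₀ (by linarith) (by linarith)]
  nlinarith

theorem lambdaMinPos_formula_general {n : ℕ} (H G : Matrix (Fin n) (Fin n) ℝ)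
    (hH : H.PosSemidef) (hG : G.PosDef) (ρ : ℝ) (hρ : 0 < ρ) :
    lambdaMinPos (hH.sqrt * (ρ⁻¹ • G + H)⁻¹ * hH.sqrt) =
      ρ * lambdaMinPos ((hG.posSemidef.sqrt)⁻¹ * H * (hG.posSemidef.sqrt)⁻¹) /
        (1 + ρ * lambdaMinPos ((hG.posSemidef.sqrt)⁻¹ * H * (hG.posSemidef.sqrt)⁻¹)) := by
  set S := hG.posSemidef.sqrt
  set Q := hH.sqrt
  set M := S⁻¹ * H * S⁻¹
  have hS : IsUnit S.det := hG.isUnit_det_sqrt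
  have hM : M.PosSemidef := by
    have h := hH.conjTranspose_mul_mul_same S⁻¹
    rwa [hG.posSemidef.posSemidef_sqrt.1.inv.eq] at h
  have hN : IsUnit (ρ⁻¹ • 1 + M).det :=
    ((PosDef.one.smul (inv_pos.2 hρ)).add_posSemidef hM).det_pos.ne'.isUnit
  have hconj : ρ⁻¹ • G + H = S * (ρ⁻¹ • 1 + M) * S := by
    rw [Matrix.mul_add, Matrix.add_mul, Matrix.mul_smul, Matrix.smul_mul, Matrix.mul_one,
      hG.posSemidef.sqrt_mul_self]
    simp only [M, ← Matrix.mul_assoc, mul_nonsing_inv _ hS, Matrix.one_mul]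
    simp only [Matrix.mul_assoc, nonsing_inv_mul _ hS, Matrix.mul_one]
  have hfactor : Q * (ρ⁻¹ • G + H)⁻¹ * Q = (Q * S⁻¹) * ((ρ⁻¹ • 1 + M)⁻¹ * (S⁻¹ * Q)) := by
    rw [hconj, Matrix.mul_inv_rev, Matrix.mul_inv_rev]
    simp only [Matrix.mul_assoc]
  have hswap : (ρ⁻¹ • 1 + M)⁻¹ * (S⁻¹ * Q) * (Q * S⁻¹) = (ρ⁻¹ • 1 + M)⁻¹ * M := by
    simp only [M, ← hH.sqrt_mul_self, Q, Matrix.mul_assoc]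
  unfold lambdaMinPos
  rw [hfactor, setOf_ne_zero_hasEigen_mul_comm, hswap,
    setOf_ne_zero_hasEigen_inv_smul_one_add_mul (inv_ne_zero hρ.ne') hN,
    (finite_setOf_ne_zero_hasEigen M).csInf_image_of_monotoneOn
      ((monotoneOn_div_add (inv_pos.2 hρ)).mono fun l hl => hl.2.nonneg_of_posSemidef hM)
      (by simp)]
  field_simp

theorem lambdaMinPos_formula {n : ℕ} (H G : Matrix (Fin n) (Fin n) ℝ)
    (hH : H.PosSemidef) (hHne : H ≠ 0) (hG : G.PosDef) (ρ : ℝ) (hρ : 0 < ρ) :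
    lambdaMinPos (hH.sqrt * (ρ⁻¹ • G + H)⁻¹ * hH.sqrt) =
      ρ * lambdaMinPos ((hG.posSemidef.sqrt)⁻¹ * H * (hG.posSemidef.sqrt)⁻¹) /
        (1 + ρ * lambdaMinPos ((hG.posSemidef.sqrt)⁻¹ * H * (hG.posSemidef.sqrt)⁻¹)) :=
  lambdaMinPos_formula_general H G hH hG ρ hρ
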